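/- For r ≥ 2, the (r+3)×(r+3) Hermitian matrix H = [[J_r - I_r, 1, 0, 0],[1ᵀ, 0, i, -i],[0, -i, 0, 1],[0, i, 1, 0]] has exactly 2 positive eigenvalues if and only if r = 2. -/

import Mathlib

/-- The Hermitian adjacency matrix `[[J_r - I_r, 1, 0, 0], [1ᵀ, 0, i, -i],
[0, -i, 0, 1], [0, i, 1, 0]]` of the mixed graph `K(r; 2; 1^i, 1^{-i}, 0^1, 0^{-1}, 0)`:
a complete graph `K_r` all joined (undirected) to a vertex `v`, an arc `v → x`, an arc
`y → v`, and an undirected edge `xy`. The three `Unit` summands are `v`, `x`, `y`. -/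
def krAdj (r : ℕ) :
    Matrix (Fin r ⊕ Unit ⊕ Unit ⊕ Unit) (Fin r ⊕ Unit ⊕ Unit ⊕ Unit) ℂ :=
  fun x y => match x, y with
  | .inl i, .inl j => if i = j then 0 else 1
  | .inl _, .inr (.inl _) => 1
  | .inr (.inl _), .inl _ => 1
  | .inr (.inl _), .inr (.inr (.inl _)) => Complex.I
  | .inr (.inr (.inl _)), .inr (.inl _) => -Complex.I
  | .inr (.inl _), .inr (.inr (.inr _)) => -Complex.I
  | .inr (.inr (.inr _)), .inr (.inl _) => Complex.I
  | .inr (.inr (.inl _)), .inr (.inr (.inr _)) => 1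
  | .inr (.inr (.inr _)), .inr (.inr (.inl _)) => 1
  | _, _ => 0

/-- The positive inertia index of a Hermitian matrix. -/
noncomputable def posIdx {n : Type*} [Fintype n] [DecidableEq n] {M : Matrix n n ℂ}
    (hM : M.IsHermitian) : ℕ :=
  Fintype.card {i // 0 < hM.eigenvalues i}

section Core

open Matrix Complex

variable {n k : Type*} [Fintype n] [DecidableEq n] [Fintype k] [DecidableEq k]

lemma krAux_quad_re_eq {M : Matrix n n ℂ} (hM : M.IsHermitian) (v : n → ℂ) :
    (star v ⬝ᵥ (M *ᵥ v)).re
      = ∑ i, hM.eigenvalues i *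
          Complex.normSq ((star (hM.eigenvectorUnitary : Matrix n n ℂ) *ᵥ v) i) := by
  set U := (hM.eigenvectorUnitary : Matrix n n ℂ) with hU
  set w := star U *ᵥ v with hw
  have hsw : star v ᵥ* U = star w := by
    rw [hw, star_mulVec]
    congr 1
    rw [← Matrix.star_eq_conjTranspose, star_star]
  have h1 : star v ⬝ᵥ (M *ᵥ v)
      = star w ⬝ᵥ (Matrix.diagonal (RCLike.ofReal ∘ hM.eigenvalues) *ᵥ w) := by
    conv_lhs => rw [hM.spectral_theorem, Unitary.conjStarAlgAut_apply]
    rw [← hU, ← Matrix.mulVec_mulVec, ← Matrix.mulVec_mulVec, dotProduct_mulVec, hsw, hw]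
  rw [h1]
  rw [dotProduct]
  rw [Complex.re_sum]
  congr 1
  ext i
  rw [Matrix.mulVec_diagonal]
  have h3 : star w i * (((RCLike.ofReal ∘ hM.eigenvalues) i) * w i)
      = (hM.eigenvalues i : ℂ) * (w i * starRingEnd ℂ (w i)) := by
    simp [Function.comp]; ring
  rw [h3, Complex.mul_conj]
  simp

omit [DecidableEq k] in
lemma krAux_card_le_posIdx {M : Matrix n n ℂ} (hM : M.IsHermitian) (B : Matrix n k ℂ)
    (hpos : ∀ c : k → ℂ, c ≠ 0 → 0 < (star (B *ᵥ c) ⬝ᵥ (M *ᵥ (B *ᵥ c))).re) :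
    Fintype.card k ≤ posIdx hM := by
  classical
  set U := (hM.eigenvectorUnitary : Matrix n n ℂ) with hU
  let f : (k → ℂ) →ₗ[ℂ] ({i // 0 < hM.eigenvalues i} → ℂ) :=
    ((star U * B).submatrix (Subtype.val) id).mulVecLin
  have hf : Function.Injective f := by
    rw [← LinearMap.ker_eq_bot, LinearMap.ker_eq_bot']
    intro c hc
    by_contra hc0
    have h := hpos c hc0
    rw [krAux_quad_re_eq hM] at h
    have hzero : ∀ i : {i // 0 < hM.eigenvalues i}, (star U *ᵥ (B *ᵥ c)) i.1 = 0 := by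
      intro i
      have h2 := congrFun hc i
      rw [Matrix.mulVec_mulVec]; exact h2
    have hle : ∑ i, hM.eigenvalues i *
        Complex.normSq ((star U *ᵥ (B *ᵥ c)) i) ≤ 0 := by
      apply Finset.sum_nonpos
      intro i _
      by_cases hi : 0 < hM.eigenvalues i
      · rw [hzero ⟨i, hi⟩]; simp
      · exact mul_nonpos_iff.2 (Or.inr ⟨le_of_not_gt hi, Complex.normSq_nonneg _⟩)
    rw [← hU] at h
    linarith
  have := LinearMap.finrank_le_finrank_of_injective hf
  simpa [Module.finrank_fintype_fun_eq_card, posIdx] using this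

omit [DecidableEq k] in
lemma krAux_posIdx_add_card_le {M : Matrix n n ℂ} (hM : M.IsHermitian) (B : Matrix n k ℂ)
    (hB : ∀ c : k → ℂ, B *ᵥ c = 0 → c = 0)
    (hneg : ∀ c : k → ℂ, (star (B *ᵥ c) ⬝ᵥ (M *ᵥ (B *ᵥ c))).re ≤ 0) :
    posIdx hM + Fintype.card k ≤ Fintype.card n := by
  classical
  set U := (hM.eigenvectorUnitary : Matrix n n ℂ) with hU
  let g : (k → ℂ) →ₗ[ℂ] ({i // ¬ 0 < hM.eigenvalues i} → ℂ) :=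
    ((star U * B).submatrix (Subtype.val) id).mulVecLin
  have hg : Function.Injective g := by
    rw [← LinearMap.ker_eq_bot, LinearMap.ker_eq_bot']
    intro c hc
    have hzero : ∀ i : {i // ¬ 0 < hM.eigenvalues i}, (star U *ᵥ (B *ᵥ c)) i.1 = 0 := by
      intro i
      have h2 := congrFun hc i
      rw [Matrix.mulVec_mulVec]; exact h2
    have hnn : ∀ i ∈ Finset.univ, (0:ℝ) ≤ hM.eigenvalues i *
        Complex.normSq ((star U *ᵥ (B *ᵥ c)) i) := by
      intro i _
      by_cases hi : 0 < hM.eigenvalues i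
      · exact mul_nonneg hi.le (Complex.normSq_nonneg _)
      · rw [hzero ⟨i, hi⟩]; simp
    have h := hneg c
    rw [krAux_quad_re_eq hM, ← hU] at h
    have hsum : ∑ i, hM.eigenvalues i *
        Complex.normSq ((star U *ᵥ (B *ᵥ c)) i) = 0 :=
      le_antisymm h (Finset.sum_nonneg hnn)
    have hall := (Finset.sum_eq_zero_iff_of_nonneg hnn).1 hsum
    have hw : (star U *ᵥ (B *ᵥ c)) = 0 := by
      funext i
      by_cases hi : 0 < hM.eigenvalues i
      · have h6 := hall i (Finset.mem_univ i)
        have h4 : Complex.normSq ((star U *ᵥ (B *ᵥ c)) i) = 0 := by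
          rcases mul_eq_zero.1 h6 with h5 | h5
          · exact absurd h5 (ne_of_gt hi)
          · exact h5
        exact Complex.normSq_eq_zero.1 h4
      · exact hzero ⟨i, hi⟩
    have hBc : B *ᵥ c = 0 := by
      have h5 : U *ᵥ (star U *ᵥ (B *ᵥ c)) = B *ᵥ c := by
        rw [Matrix.mulVec_mulVec, (Matrix.mem_unitaryGroup_iff).mp hM.eigenvectorUnitary.2,
          Matrix.one_mulVec]
      rw [← h5, hw, Matrix.mulVec_zero]
    exact hB c hBc
  have hcard := LinearMap.finrank_le_finrank_of_injective hg
  simp only [Module.finrank_fintype_fun_eq_card] at hcard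
  have h1 : Fintype.card {i // ¬ 0 < hM.eigenvalues i}
      = Fintype.card n - Fintype.card {i // 0 < hM.eigenvalues i} :=
    Fintype.card_subtype_compl _
  have h2 : Fintype.card {i // 0 < hM.eigenvalues i} ≤ Fintype.card n :=
    Fintype.card_subtype_le _
  simp only [posIdx]
  omega

end Core

noncomputable section App

open Matrix Complex

/-- three columns spanning a positive subspace when `r ≥ 3` -/
def krAuxBpos (r : ℕ) : Matrix (Fin r ⊕ Unit ⊕ Unit ⊕ Unit) (Fin 3) ℂ :=
  Sum.elim (fun _ => ![1, -1, 0])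
    (Sum.elim (fun _ => ![0, (r:ℂ) - 1, 0])
      (Sum.elim (fun _ => ![0, -((r:ℂ) - 1) * Complex.I, 1])
        (fun _ => ![0, ((r:ℂ) - 1) * Complex.I, 1])))

lemma krAux_sum_off {r : ℕ} (i : Fin r) (C : ℂ) :
    ∑ j : Fin r, (if i = j then (0:ℂ) else 1) * C = ((r:ℂ) - 1) * C := by
  rw [← Finset.sum_mul]
  congr 1
  have h : ∀ j : Fin r, (if i = j then (0:ℂ) else 1) = 1 - (if i = j then 1 else 0) := by
    intro j; split <;> ring
  simp only [h, Finset.sum_sub_distrib, Finset.sum_const, Finset.card_univ, Fintype.card_fin,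
    nsmul_eq_mul, mul_one, Finset.sum_ite_eq, Finset.mem_univ, if_true]

lemma krAuxBpos_mulVec (r : ℕ) (c : Fin 3 → ℂ) :
    krAuxBpos r *ᵥ c = Sum.elim (fun _ => c 0 - c 1)
      (Sum.elim (fun _ => ((r:ℂ) - 1) * c 1)
        (Sum.elim (fun _ => -((r:ℂ) - 1) * Complex.I * c 1 + c 2)
          (fun _ => ((r:ℂ) - 1) * Complex.I * c 1 + c 2))) := by
  funext p
  rcases p with i | (u | (u | u)) <;>
    simp [krAuxBpos, Matrix.mulVec, dotProduct, Fin.sum_univ_three] <;> ring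

lemma krAux_quad_pos (r : ℕ) (c : Fin 3 → ℂ) :
    star (krAuxBpos r *ᵥ c) ⬝ᵥ (krAdj r *ᵥ (krAuxBpos r *ᵥ c))
      = ((r:ℂ) * ((r:ℂ) - 1)) * (c 0 * starRingEnd ℂ (c 0))
        + (((r:ℂ) - 1) * ((r:ℂ) - 2)) * (c 1 * starRingEnd ℂ (c 1))
        + 2 * (c 2 * starRingEnd ℂ (c 2)) := by
  set a := c 0; set b := c 1; set d := c 2
  rw [krAuxBpos_mulVec]
  set v : (Fin r ⊕ Unit ⊕ Unit ⊕ Unit) → ℂ := Sum.elim (fun _ => a - b)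
      (Sum.elim (fun _ => ((r:ℂ) - 1) * b)
        (Sum.elim (fun _ => -((r:ℂ) - 1) * Complex.I * b + d)
          (fun _ => ((r:ℂ) - 1) * Complex.I * b + d))) with hv
  have hHv : krAdj r *ᵥ v = Sum.elim (fun _ => ((r:ℂ) - 1) * a)
      (Sum.elim (fun _ => (r:ℂ) * a + ((r:ℂ) - 2) * b)
        (Sum.elim (fun _ => d) (fun _ => d))) := by
    funext p
    rcases p with i | (u | (u | u))
    · simp only [Matrix.mulVec, dotProduct, Fintype.sum_sum_type, krAdj, hv,
        Fintype.sum_unique, Sum.elim_inl, Sum.elim_inr]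
      rw [krAux_sum_off i (a - b)]
      ring
    · simp only [Matrix.mulVec, dotProduct, Fintype.sum_sum_type, krAdj, hv,
        Fintype.sum_unique, Sum.elim_inl, Sum.elim_inr, Finset.sum_const, Finset.card_univ,
        Fintype.card_fin, nsmul_eq_mul]
      ring_nf
      simp [Complex.I_sq]
      try ring
    · simp only [Matrix.mulVec, dotProduct, Fintype.sum_sum_type, krAdj, hv,
        Fintype.sum_unique, Sum.elim_inl, Sum.elim_inr, Finset.sum_const, Finset.card_univ,
        Fintype.card_fin, nsmul_eq_mul]
      ring_nf
      simp [Complex.I_sq]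
      try ring
    · simp only [Matrix.mulVec, dotProduct, Fintype.sum_sum_type, krAdj, hv,
        Fintype.sum_unique, Sum.elim_inl, Sum.elim_inr, Finset.sum_const, Finset.card_univ,
        Fintype.card_fin, nsmul_eq_mul]
      ring_nf
      simp [Complex.I_sq]
      try ring
  rw [hHv]
  simp only [dotProduct, Fintype.sum_sum_type, Fintype.sum_unique, Sum.elim_inl,
    Sum.elim_inr, Pi.star_apply, hv, Complex.star_def, Finset.sum_const, Finset.card_univ,
    Fintype.card_fin, nsmul_eq_mul, map_sub, map_add, _root_.map_mul, _root_.map_one,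
    Complex.conj_I, map_natCast, map_neg]
  ring_nf
  simp [Complex.I_sq]
  try ring

lemma krAux_quad_pos_re (r : ℕ) (hr3 : 3 ≤ r) (c : Fin 3 → ℂ) (hc : c ≠ 0) :
    0 < (star (krAuxBpos r *ᵥ c) ⬝ᵥ (krAdj r *ᵥ (krAuxBpos r *ᵥ c))).re := by
  rw [krAux_quad_pos]
  rw [Complex.mul_conj, Complex.mul_conj, Complex.mul_conj]
  have h : ((r:ℂ) * ((r:ℂ) - 1)) * (Complex.normSq (c 0) : ℂ)
        + (((r:ℂ) - 1) * ((r:ℂ) - 2)) * (Complex.normSq (c 1) : ℂ)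
        + 2 * (Complex.normSq (c 2) : ℂ)
      = (((r:ℝ) * ((r:ℝ) - 1)) * Complex.normSq (c 0)
        + (((r:ℝ) - 1) * ((r:ℝ) - 2)) * Complex.normSq (c 1)
        + 2 * Complex.normSq (c 2) : ℝ) := by
    push_cast
    ring
  rw [h, Complex.ofReal_re]
  have hr : (3:ℝ) ≤ (r:ℝ) := by exact_mod_cast hr3
  have h0 := Complex.normSq_nonneg (c 0)
  have h1 := Complex.normSq_nonneg (c 1)
  have h2 := Complex.normSq_nonneg (c 2)
  have hj : c 0 ≠ 0 ∨ c 1 ≠ 0 ∨ c 2 ≠ 0 := by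
    by_contra hcon
    push_neg at hcon
    apply hc
    funext j
    fin_cases j <;> simp [hcon.1, hcon.2.1, hcon.2.2]
  have hr1 : (0:ℝ) < (r:ℝ) - 1 := by linarith
  have hr2 : (0:ℝ) ≤ (r:ℝ) - 2 := by linarith
  have hrpos : (0:ℝ) < (r:ℝ) := by linarith
  have k0 : (0:ℝ) ≤ (r:ℝ) * ((r:ℝ) - 1) * Complex.normSq (c 0) :=
    mul_nonneg (mul_nonneg hrpos.le hr1.le) h0
  have k1 : (0:ℝ) ≤ ((r:ℝ) - 1) * ((r:ℝ) - 2) * Complex.normSq (c 1) :=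
    mul_nonneg (mul_nonneg hr1.le hr2) h1
  have k2 : (0:ℝ) ≤ 2 * Complex.normSq (c 2) := by linarith
  rcases hj with hj | hj | hj
  · have hp := Complex.normSq_pos.2 hj
    have : (0:ℝ) < (r:ℝ) * ((r:ℝ) - 1) * Complex.normSq (c 0) :=
      mul_pos (mul_pos hrpos hr1) hp
    linarith
  · have hp := Complex.normSq_pos.2 hj
    have hr2' : (0:ℝ) < (r:ℝ) - 2 := by linarith
    have : (0:ℝ) < ((r:ℝ) - 1) * ((r:ℝ) - 2) * Complex.normSq (c 1) :=
      mul_pos (mul_pos hr1 hr2') hp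
    linarith
  · have hp := Complex.normSq_pos.2 hj
    linarith

/-- two columns spanning a positive subspace for `r = 2` -/
def krAuxB2 : Matrix (Fin 2 ⊕ Unit ⊕ Unit ⊕ Unit) (Fin 2) ℂ :=
  Sum.elim (fun _ => ![1, 0])
    (Sum.elim (fun _ => ![0, 0])
      (Sum.elim (fun _ => ![0, 1]) (fun _ => ![0, 1])))

lemma krAux_quad_two (c : Fin 2 → ℂ) :
    star (krAuxB2 *ᵥ c) ⬝ᵥ (krAdj 2 *ᵥ (krAuxB2 *ᵥ c))
      = 2 * (c 0 * starRingEnd ℂ (c 0)) + 2 * (c 1 * starRingEnd ℂ (c 1)) := by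
  simp [krAuxB2, krAdj, Matrix.mulVec, dotProduct, Fintype.sum_sum_type,
    Fin.sum_univ_two, Fintype.sum_unique, Complex.star_def]
  ring

lemma krAux_quad_two_re (c : Fin 2 → ℂ) (hc : c ≠ 0) :
    0 < (star (krAuxB2 *ᵥ c) ⬝ᵥ (krAdj 2 *ᵥ (krAuxB2 *ᵥ c))).re := by
  rw [krAux_quad_two, Complex.mul_conj, Complex.mul_conj]
  have h : 2 * (Complex.normSq (c 0) : ℂ) + 2 * (Complex.normSq (c 1) : ℂ)
      = ((2 * Complex.normSq (c 0) + 2 * Complex.normSq (c 1) : ℝ) : ℂ) := by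
    push_cast; ring
  rw [h, Complex.ofReal_re]
  have h0 := Complex.normSq_nonneg (c 0)
  have h1 := Complex.normSq_nonneg (c 1)
  have hj : c 0 ≠ 0 ∨ c 1 ≠ 0 := by
    by_contra hcon
    push_neg at hcon
    apply hc
    funext j
    fin_cases j <;> simp [hcon.1, hcon.2]
  rcases hj with hj | hj <;>
    have := Complex.normSq_pos.2 hj <;> nlinarith

/-- three columns spanning a nonpositive subspace for `r = 2` -/
def krAuxBneg : Matrix (Fin 2 ⊕ Unit ⊕ Unit ⊕ Unit) (Fin 3) ℂ :=
  Sum.elim (fun i => if i = 0 then ![2, 0, 0] else ![0, 2, 0])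
    (Sum.elim (fun _ => ![-1, -1, 0])
      (Sum.elim (fun _ => ![0, 0, 1]) (fun _ => ![0, 0, -1])))

lemma krAux_Bneg_inj (c : Fin 3 → ℂ) (h : krAuxBneg *ᵥ c = 0) : c = 0 := by
  have h0 := congrFun h (Sum.inl 0)
  have h1 := congrFun h (Sum.inl 1)
  have h2 := congrFun h (Sum.inr (Sum.inr (Sum.inl ())))
  simp [krAuxBneg, Matrix.mulVec, dotProduct, Fin.sum_univ_three] at h0 h1 h2
  funext j
  fin_cases j <;> simp_all

lemma krAux_quad_neg (c : Fin 3 → ℂ) :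
    star (krAuxBneg *ᵥ c) ⬝ᵥ (krAdj 2 *ᵥ (krAuxBneg *ᵥ c))
      = -2 * ((c 0 - c 1) * starRingEnd ℂ (c 0 - c 1))
        - 2 * ((c 0 + c 1 + Complex.I * c 2) * starRingEnd ℂ (c 0 + c 1 + Complex.I * c 2)) := by
  simp [krAuxBneg, krAdj, Matrix.mulVec, dotProduct, Fintype.sum_sum_type,
    Fin.sum_univ_two, Fin.sum_univ_three, Fintype.sum_unique, Complex.star_def,
    map_sub, map_add, _root_.map_mul, Complex.conj_I, Complex.conj_ofNat]
  ring_nf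
  simp [Complex.I_sq]
  try ring

lemma krAux_quad_neg_re (c : Fin 3 → ℂ) :
    (star (krAuxBneg *ᵥ c) ⬝ᵥ (krAdj 2 *ᵥ (krAuxBneg *ᵥ c))).re ≤ 0 := by
  rw [krAux_quad_neg, Complex.mul_conj, Complex.mul_conj]
  have h : (-2 : ℂ) * (Complex.normSq (c 0 - c 1) : ℂ)
        - 2 * (Complex.normSq (c 0 + c 1 + Complex.I * c 2) : ℂ)
      = ((-2 * Complex.normSq (c 0 - c 1)
        - 2 * Complex.normSq (c 0 + c 1 + Complex.I * c 2) : ℝ) : ℂ) := by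
    push_cast; ring
  rw [h, Complex.ofReal_re]
  have h0 := Complex.normSq_nonneg (c 0 - c 1)
  have h1 := Complex.normSq_nonneg (c 0 + c 1 + Complex.I * c 2)
  linarith

end App

/-- For `r ≥ 2`, the matrix `krAdj r` has exactly 2 positive eigenvalues iff `r = 2`. -/
theorem krAdj_posIdx_iff (r : ℕ) (hr : 2 ≤ r) (hH : (krAdj r).IsHermitian) :
    posIdx hH = 2 ↔ r = 2 := by
  constructor
  · intro h2
    by_contra hne
    have hr3 : 3 ≤ r := by omega
    have hle := krAux_card_le_posIdx hH (krAuxBpos r)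
      (fun c hc => krAux_quad_pos_re r hr3 c hc)
    rw [h2] at hle
    simp [Fintype.card_fin] at hle
  · rintro rfl
    have h1 := krAux_card_le_posIdx hH krAuxB2 (fun c hc => krAux_quad_two_re c hc)
    have h2 := krAux_posIdx_add_card_le hH krAuxBneg krAux_Bneg_inj krAux_quad_neg_re
    simp only [Fintype.card_fin, Fintype.card_sum, Fintype.card_unit] at h1 h2
    omega
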